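/- Let X = {−∞} ∪ ℤ ∪ {∞} be the two-point compactification of ℤ, formally the linearly ordered set obtained by adjoining a bottom element −∞ and a top element ∞ to ℤ, equipped with the order topology (it is a compact Hausdorff space in which each n ∈ ℤ is isolated). The map sending f ∈ B_ℤ to the continuous function f̃ ∈ C(X, ℂ) defined by f̃(k) = f(k) for k ∈ ℤ, f̃(∞) = lim_{k→∞} f(k), and f̃(−∞) = 0, is an isometric star-algebra isomorphism of B_ℤ onto the maximal ideal I = {g ∈ C(X, ℂ) : g(−∞) = 0} of C(X, ℂ). -/

import Mathlib

open BoundedContinuousFunction Filter Topology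

/-- The indicator function of `{k : ℤ | n ≤ k}` as a bounded (continuous) function `ℤ → ℂ`,
an element of `ℓ∞(ℤ, ℂ)`. -/
noncomputable def indBZ (n : ℤ) : ℤ →ᵇ ℂ :=
  BoundedContinuousFunction.ofNormedAddCommGroup
    (fun k => if n ≤ k then (1:ℂ) else 0)
    (continuous_of_discreteTopology) 1
    (fun k => by by_cases h : n ≤ k <;> simp [h])

lemma indBZ_apply (n k : ℤ) : indBZ n k = if n ≤ k then (1:ℂ) else 0 := rfl

lemma indBZ_mul (n m : ℤ) : indBZ n * indBZ m = indBZ (max n m) := by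
  ext k
  simp only [BoundedContinuousFunction.coe_mul, Pi.mul_apply, indBZ_apply]
  by_cases h1 : n ≤ k <;> by_cases h2 : m ≤ k <;> simp [h1, h2, max_le_iff]

lemma star_indBZ (n : ℤ) : star (indBZ n) = indBZ n := by
  ext k
  simp only [BoundedContinuousFunction.star_apply, indBZ_apply]
  by_cases h : n ≤ k <;> simp [h]

/-- The linear span of `{1_n : n ∈ ℤ}` in `ℓ∞(ℤ, ℂ)`. -/
noncomputable def BZspan : Submodule ℂ (ℤ →ᵇ ℂ) := Submodule.span ℂ (Set.range indBZ)

lemma BZspan_mul_mem {f g : ℤ →ᵇ ℂ} (hf : f ∈ BZspan) (hg : g ∈ BZspan) : f * g ∈ BZspan := by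
  have h : BZspan * BZspan ≤ BZspan := by
    rw [BZspan, Submodule.span_mul_span]
    refine Submodule.span_le.mpr ?_
    rintro x ⟨a, ⟨n, rfl⟩, b, ⟨m, rfl⟩, rfl⟩
    exact Submodule.subset_span ⟨max n m, (indBZ_mul n m).symm⟩
  exact h (Submodule.mul_mem_mul hf hg)

lemma BZspan_star_mem {f : ℤ →ᵇ ℂ} (hf : f ∈ BZspan) : star f ∈ BZspan := by
  induction hf using Submodule.span_induction with
  | mem x hx => obtain ⟨n, rfl⟩ := hx; rw [star_indBZ]; exact Submodule.subset_span ⟨n, rfl⟩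
  | zero => simp only [star_zero]; exact Submodule.zero_mem _
  | add x y _ _ hx hy => rw [star_add]; exact Submodule.add_mem _ hx hy
  | smul c x _ hx => rw [star_smul]; exact Submodule.smul_mem _ _ hx

/-- `B_ℤ`: the closed linear span of `{1_n : n ∈ ℤ}` in `ℓ∞(ℤ, ℂ)`, which is a
(non-unital) C*-subalgebra of `ℓ∞(ℤ, ℂ)`. -/
noncomputable def BZalg : NonUnitalStarSubalgebra ℂ (ℤ →ᵇ ℂ) :=
  NonUnitalStarSubalgebra.topologicalClosure
    { BZspan with
      mul_mem' := BZspan_mul_mem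
      star_mem' := BZspan_star_mem }

/-- Membership in `B_ℤ` is exactly membership in the closed linear span of the `1_n`. -/
lemma BZalg_mem_iff (f : ℤ →ᵇ ℂ) :
    f ∈ BZalg ↔ f ∈ (Submodule.span ℂ (Set.range indBZ)).topologicalClosure := Iff.rfl

/-- The two-point compactification `X = {−∞} ∪ ℤ ∪ {∞}` of `ℤ`: the linearly ordered set
obtained by adjoining a bottom element `−∞` and a top element `∞` to `ℤ`. -/
abbrev Xc := WithTop (WithBot ℤ)

/-- `X` carries the order topology (a compact Hausdorff topology in which every `n ∈ ℤ` is
isolated). -/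
noncomputable instance : TopologicalSpace Xc := Preorder.topology Xc

instance : OrderTopology Xc := ⟨rfl⟩

/-!
Restriction to `ℤ` is an isometric *-homomorphism `C(X, ℂ) → ℓ∞(ℤ, ℂ)`, because `ℤ` is dense in
`X`. It sends the indicator of the clopen set `[n, ∞]` to `1_n`, so the image of the closed ideal
`I` is closed and contains `B_ℤ`. Conversely these indicators lie in `I` and separate the points
of `X`, so by the Stone–Weierstrass theorem the *-subalgebra they generate is dense in `I`, and
`I` is mapped into `B_ℤ`. The map `f ↦ f̃` is the inverse of this restriction.
-/

open Set

namespace ContinuousMap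

variable {X 𝕜 : Type*} [TopologicalSpace X] [RCLike 𝕜]

variable (𝕜) in
def vanishingAt (x₀ : X) : NonUnitalStarSubalgebra 𝕜 C(X, 𝕜) where
  carrier := {f | f x₀ = 0}
  add_mem' hf hg := by simp_all
  zero_mem' := rfl
  mul_mem' hf hg := by simp_all
  smul_mem' c f hf := by simp_all
  star_mem' hf := by simp_all

@[simp]
lemma mem_vanishingAt {x₀ : X} {f : C(X, 𝕜)} : f ∈ vanishingAt 𝕜 x₀ ↔ f x₀ = 0 := Iff.rfl

lemma isClosed_vanishingAt (x₀ : X) : IsClosed (vanishingAt 𝕜 x₀ : Set C(X, 𝕜)) :=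
  isClosed_eq (continuous_eval_const x₀) continuous_const

theorem closure_eq_vanishingAt_of_separatesPoints [CompactSpace X] {x₀ : X}
    {N : NonUnitalStarSubalgebra 𝕜 C(X, 𝕜)} (hN : N ≤ vanishingAt 𝕜 x₀)
    (hsep : ((⇑) '' (N : Set C(X, 𝕜))).SeparatesPoints) :
    closure (N : Set C(X, 𝕜)) = vanishingAt 𝕜 x₀ := by
  -- The unitization `A = span {1} ⊔ N` is dense, and its elements vanishing at `x₀` lie in `N`.
  set A := StarAlgebra.adjoin 𝕜 (N : Set C(X, 𝕜))
  have hA : closure (A : Set C(X, 𝕜)) = univ := by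
    have := starSubalgebra_topologicalClosure_eq_top_of_separatesPoints A
      fun x y hxy => by
        obtain ⟨_, ⟨f, hf, rfl⟩, hfxy⟩ := hsep hxy
        exact ⟨f, ⟨f, StarAlgebra.subset_adjoin 𝕜 _ hf, rfl⟩, hfxy⟩
    simpa [← StarSubalgebra.topologicalClosure_coe] using congrArg SetLike.coe this
  have hAN : (A : Set C(X, 𝕜)) ∩ RingHom.ker (evalStarAlgHom 𝕜 𝕜 x₀) ⊆ N := by
    rintro a ⟨ha, ha₀ : a x₀ = 0⟩
    rw [SetLike.mem_coe, ← StarSubalgebra.mem_toSubalgebra, ← Subalgebra.mem_toSubmodule,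
      StarAlgebra.adjoin_nonUnitalStarSubalgebra_eq_span, Submodule.mem_sup] at ha
    obtain ⟨_, hc, n, hn, rfl⟩ := ha
    obtain ⟨c, rfl⟩ := Submodule.mem_span_singleton.mp hc
    have hc0 : c = 0 := by simpa [mem_vanishingAt.mp (hN hn)] using ha₀
    simpa [hc0] using hn
  refine subset_antisymm (closure_minimal hN (isClosed_vanishingAt x₀)) fun f hf => ?_
  have hf' : f ∈ closure (A : Set C(X, 𝕜)) ∩ RingHom.ker (evalStarAlgHom 𝕜 𝕜 x₀) :=
    ⟨hA ▸ mem_univ f, hf⟩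
  rw [← AlgHom.closure_ker_inter _ (continuous_eval_const x₀)] at hf'
  exact closure_mono hAN hf'

end ContinuousMap

lemma BoundedContinuousFunction.norm_compContinuous_of_denseRange {X Y E : Type*}
    [TopologicalSpace X] [TopologicalSpace Y] [SeminormedAddCommGroup E] (f : X →ᵇ E)
    {i : C(Y, X)} (hi : DenseRange i) : ‖f.compContinuous i‖ = ‖f‖ := by
  refine le_antisymm (f.norm_compContinuous_le i) ((f.norm_le (norm_nonneg _)).mpr fun x => ?_)
  have hclosed : IsClosed {x | ‖f x‖ ≤ ‖f.compContinuous i‖} :=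
    isClosed_le f.continuous.norm continuous_const
  exact hclosed.closure_subset_iff.mpr (range_subset_iff.mpr (f.compContinuous i).norm_coe_le_norm)
    (hi x)

lemma NonUnitalStarAlgHom.exists_section_of_le_range {R A B : Type*} [CommSemiring R]
    [NonUnitalSemiring A] [Module R A] [Star A] [NonUnitalSemiring B] [StarRing B] [Module R B]
    (ρ : A →⋆ₙₐ[R] B) (hρ : Function.Injective ρ) {S : NonUnitalStarSubalgebra R B}
    (hS : S ≤ NonUnitalStarAlgHom.range ρ) : ∃ Φ : S →⋆ₙₐ[R] A, ∀ f, ρ (Φ f) = f := by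
  let e := StarAlgEquiv.ofInjective' ρ hρ
  refine ⟨(e.symm : NonUnitalStarAlgHom.range ρ →⋆ₙₐ[R] A).comp
    (NonUnitalStarSubalgebra.inclusion hS), fun f => ?_⟩
  exact congrArg Subtype.val (e.apply_symm_apply (NonUnitalStarSubalgebra.inclusion hS f))

namespace Xc

lemma monotone_coe : Monotone (fun k : ℤ => ((k : WithBot ℤ) : Xc)) :=
  fun _ _ h => by simpa using h

lemma tendsto_coe_atTop : Tendsto (fun k : ℤ => ((k : WithBot ℤ) : Xc)) atTop (𝓝 ⊤) := by
  refine tendsto_atTop_isLUB monotone_coe ⟨fun _ _ => le_top, fun b hb => ?_⟩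
  induction b using WithTop.recTopCoe with
  | top => exact le_rfl
  | coe b =>
    induction b using WithBot.recBotCoe with
    | bot => exact absurd (hb (mem_range_self 0)) (by norm_cast)
    | coe m =>
      have := hb (mem_range_self (m + 1))
      norm_cast at this
      omega

lemma tendsto_coe_atBot :
    Tendsto (fun k : ℤ => ((k : WithBot ℤ) : Xc)) atBot (𝓝 ((⊥ : WithBot ℤ) : Xc)) := by
  refine tendsto_atBot_isGLB monotone_coe ⟨?_, fun b hb => ?_⟩
  · rintro _ ⟨k, rfl⟩
    simp
  induction b using WithTop.recTopCoe with
  | top => simpa using hb (mem_range_self 0)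
  | coe b =>
    induction b using WithBot.recBotCoe with
    | bot => exact le_rfl
    | coe m => simpa using hb (mem_range_self (m - 1))

lemma denseRange_coe : DenseRange (fun k : ℤ => ((k : WithBot ℤ) : Xc)) := by
  intro x
  induction x using WithTop.recTopCoe with
  | top => exact mem_closure_of_tendsto tendsto_coe_atTop (.of_forall mem_range_self)
  | coe b =>
    induction b using WithBot.recBotCoe with
    | bot => exact mem_closure_of_tendsto tendsto_coe_atBot (.of_forall mem_range_self)
    | coe m => exact subset_closure (mem_range_self m)

lemma Ici_coe_eq_Ioi (n : ℤ) :
    Ici ((n : WithBot ℤ) : Xc) = Ioi (((n - 1 : ℤ) : WithBot ℤ) : Xc) := by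
  ext x
  induction x using WithTop.recTopCoe with
  | top => simp
  | coe b =>
    induction b using WithBot.recBotCoe with
    | bot => simp
    | coe m => simp

lemma isClopen_Ici_coe (n : ℤ) : IsClopen (Ici ((n : WithBot ℤ) : Xc)) :=
  ⟨isClosed_Ici, Ici_coe_eq_Ioi n ▸ isOpen_Ioi⟩

lemma exists_coe_btw {x y : Xc} (h : x < y) :
    ∃ n : ℤ, x < ((n : WithBot ℤ) : Xc) ∧ ((n : WithBot ℤ) : Xc) ≤ y := by
  induction y using WithTop.recTopCoe with
  | top =>
    induction x using WithTop.recTopCoe with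
    | top => exact absurd h (lt_irrefl _)
    | coe a =>
      induction a using WithBot.recBotCoe with
      | bot => exact ⟨0, WithTop.coe_lt_coe.mpr (WithBot.bot_lt_coe 0), le_top⟩
      | coe m => exact ⟨m + 1, by norm_cast; omega, le_top⟩
  | coe b =>
    induction b using WithBot.recBotCoe with
    | bot => simp at h
    | coe m => exact ⟨m, h, le_rfl⟩

end Xc

local notation "I₀" => ContinuousMap.vanishingAt ℂ ((⊥ : WithBot ℤ) : Xc)

noncomputable def indX (n : ℤ) : C(Xc, ℂ) :=
  ⟨(Ici ((n : WithBot ℤ) : Xc)).indicator 1,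
    (Xc.isClopen_Ici_coe n).continuous_indicator continuous_const⟩

lemma indX_apply (n : ℤ) (x : Xc) :
    indX n x = if ((n : WithBot ℤ) : Xc) ≤ x then 1 else 0 := by
  simp [indX, Set.indicator_apply]

lemma indX_mem_vanishingAt (n : ℤ) : indX n ∈ I₀ := by
  simp [indX_apply]

lemma exists_indX_ne {x y : Xc} (h : x ≠ y) : ∃ n, indX n x ≠ indX n y := by
  wlog hlt : x < y generalizing x y
  · obtain ⟨n, hn⟩ := this h.symm (h.lt_or_gt.resolve_left hlt)
    exact ⟨n, hn.symm⟩
  obtain ⟨n, hxn, hny⟩ := Xc.exists_coe_btw hlt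
  exact ⟨n, by simp [indX_apply, hny, not_le.mpr hxn]⟩

noncomputable def restrictInt : C(Xc, ℂ) →⋆ₙₐ[ℂ] (ℤ →ᵇ ℂ) where
  toFun g := (mkOfCompact g).compContinuous
    ⟨fun k : ℤ => ((k : WithBot ℤ) : Xc), continuous_of_discreteTopology⟩
  map_smul' _ _ := rfl
  map_zero' := rfl
  map_add' _ _ := rfl
  map_mul' _ _ := rfl
  map_star' _ := rfl

lemma restrictInt_apply (g : C(Xc, ℂ)) (k : ℤ) : restrictInt g k = g ((k : WithBot ℤ) : Xc) := rfl

lemma isometry_restrictInt : Isometry restrictInt :=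
  AddMonoidHomClass.isometry_of_norm _ fun g =>
    ((mkOfCompact g).norm_compContinuous_of_denseRange Xc.denseRange_coe).trans (norm_mkOfCompact g)

lemma restrictInt_indX (n : ℤ) : restrictInt (indX n) = indBZ n := by
  ext k
  simp [restrictInt_apply, indX_apply, indBZ_apply]

lemma BZalg_le_range :
    BZalg ≤
      NonUnitalStarAlgHom.range (restrictInt.comp (NonUnitalStarSubalgebraClass.subtype I₀)) := by
  have : CompleteSpace I₀ := (ContinuousMap.isClosed_vanishingAt _).completeSpace_coe
  refine NonUnitalStarSubalgebra.topologicalClosure_minimal _ ?_ ?_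
  · refine (Submodule.span_le
      (p := (NonUnitalStarAlgHom.range _).toNonUnitalSubalgebra.toSubmodule)).mpr
      (range_subset_iff.mpr fun n => ?_)
    exact ⟨⟨indX n, indX_mem_vanishingAt n⟩, restrictInt_indX n⟩
  · rw [NonUnitalStarAlgHom.coe_range]
    exact (isometry_restrictInt.comp isometry_subtype_coe).isClosedEmbedding.isClosed_range

lemma restrictInt_mem_BZalg {g : C(Xc, ℂ)} (hg : g ∈ I₀) : restrictInt g ∈ BZalg := by
  set N := NonUnitalStarAlgebra.adjoin ℂ (range indX)
  have hN : N ≤ I₀ := NonUnitalStarAlgebra.adjoin_le (range_subset_iff.mpr indX_mem_vanishingAt)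
  have hNB : N ≤ BZalg.comap restrictInt := NonUnitalStarAlgebra.adjoin_le <| range_subset_iff.mpr
    fun n => show restrictInt (indX n) ∈ BZalg from
      (restrictInt_indX n).symm ▸ subset_closure (Submodule.subset_span ⟨n, rfl⟩)
  have hsep : ((⇑) '' (N : Set C(Xc, ℂ))).SeparatesPoints := fun x y hxy => by
    obtain ⟨n, hn⟩ := exists_indX_ne hxy
    exact ⟨indX n, ⟨indX n, NonUnitalStarAlgebra.subset_adjoin ℂ _ (mem_range_self n), rfl⟩, hn⟩
  have hgN : g ∈ closure (N : Set C(Xc, ℂ)) := by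
    rwa [ContinuousMap.closure_eq_vanishingAt_of_separatesPoints hN hsep]
  have hclosed : IsClosed (BZalg.comap restrictInt : Set C(Xc, ℂ)) :=
    (NonUnitalStarSubalgebra.isClosed_topologicalClosure _).preimage isometry_restrictInt.continuous
  exact closure_minimal hNB hclosed hgN

/-- The map `f ↦ f̃`, where `f̃(k) = f(k)` for `k ∈ ℤ`, `f̃(∞) = lim_{k→∞} f(k)` and
`f̃(−∞) = 0`, is an isometric star-algebra isomorphism of `B_ℤ` onto the maximal ideal
`I = {g ∈ C(X, ℂ) : g(−∞) = 0}` of `C(X, ℂ)`. -/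
theorem BZ_iso_ideal_of_twoPointCompactification :
    ∃ Φ : ↥BZalg →⋆ₙₐ[ℂ] C(Xc, ℂ),
      (∀ (f : ↥BZalg) (k : ℤ), Φ f ((k : WithBot ℤ) : Xc) = (f : ℤ →ᵇ ℂ) k) ∧
      (∀ f : ↥BZalg,
        Tendsto (fun k : ℤ => (f : ℤ →ᵇ ℂ) k) atTop (𝓝 (Φ f (⊤ : Xc)))) ∧
      (∀ f : ↥BZalg, Φ f ((⊥ : WithBot ℤ) : Xc) = 0) ∧
      (∀ f : ↥BZalg, ‖Φ f‖ = ‖(f : ℤ →ᵇ ℂ)‖) ∧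
      Function.Injective Φ ∧
      (∀ f : ↥BZalg, Φ (star f) = star (Φ f)) ∧
      Set.range Φ = {g : C(Xc, ℂ) | g ((⊥ : WithBot ℤ) : Xc) = 0} ∧
      ∃ I : Ideal C(Xc, ℂ), (I : Set C(Xc, ℂ)) = {g : C(Xc, ℂ) | g ((⊥ : WithBot ℤ) : Xc) = 0} ∧
        I.IsMaximal := by
  obtain ⟨Ψ, hΨ⟩ :=
    (restrictInt.comp (NonUnitalStarSubalgebraClass.subtype I₀)).exists_section_of_le_range
      (isometry_restrictInt.injective.comp Subtype.val_injective) BZalg_le_range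
  have hρΨ (f : BZalg) : restrictInt (Ψ f) = f := hΨ f
  refine ⟨(NonUnitalStarSubalgebraClass.subtype I₀).comp Ψ, fun f k => congrArg (· k) (hρΨ f),
    fun f => ?_, fun f => (Ψ f).2, fun f => ?_, fun f g hfg => ?_, map_star _, ?_, ?_⟩
  · exact (((Ψ f : C(Xc, ℂ)).continuous.tendsto _).comp Xc.tendsto_coe_atTop).congr
      fun k => congrArg (· k) (hρΨ f)
  · rw [← hρΨ f, isometry_restrictInt.norm_map_of_map_zero (map_zero _)]
    rfl
  · exact Subtype.ext ((hρΨ f).symm.trans ((congrArg restrictInt hfg).trans (hρΨ g)))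
  · refine subset_antisymm (range_subset_iff.mpr fun f => (Ψ f).2) fun g hg => ?_
    exact ⟨⟨restrictInt g, restrictInt_mem_BZalg hg⟩,
      isometry_restrictInt.injective (hρΨ ⟨restrictInt g, restrictInt_mem_BZalg hg⟩)⟩
  · refine ⟨RingHom.ker (ContinuousMap.evalStarAlgHom ℂ ℂ ((⊥ : WithBot ℤ) : Xc)), rfl,
      RingHom.ker_isMaximal_of_surjective _ fun c => ⟨ContinuousMap.const _ c, rfl⟩⟩
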